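/- arXiv:2207.10224 — 4 statements merged into one kernel-verified Lean document; each statement's English description precedes it below -/
import Mathlib

section
/- For all integers n ≥ 0 and all real x, n! · x^n = Σ_{k=0}^{n} A(n,k) · (x−k)·(x−k+1)···(x−k+n−1), where A(n,k) is the Eulerian number counting permutations of {1,…,n} with k descents (Worpitzky's identity, with the rising factorial of length n). -/
/-- Stirling subset numbers (Stirling numbers of the second kind). -/
def stirling2 : ℕ → ℕ → ℕ
  | 0, 0 => 1
  | 0, _+1 => 0
  | _+1, 0 => 0
  | n+1, k+1 => (k+1) * stirling2 n (k+1) + stirling2 n k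

/-- Eulerian numbers: permutations of an n-set with k descents. -/
def eulerian : ℕ → ℕ → ℕ
  | 0, 0 => 1
  | 0, _+1 => 0
  | n+1, 0 => eulerian n 0
  | n+1, k+1 => (k+2) * eulerian n (k+1) + (n-k) * eulerian n k

lemma eulerian_eq_zero : ∀ n k : ℕ, n < k → eulerian n k = 0
  | 0, k+1, _ => rfl
  | n+1, k+1, h => by
    have h' : n < k := Nat.lt_of_succ_lt_succ h
    simp [eulerian, eulerian_eq_zero n (k+1) (Nat.lt_succ_of_lt h'),
      eulerian_eq_zero n k h', Nat.sub_eq_zero_of_le (le_of_lt h')]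

/-- Worpitzky's identity. -/
theorem worpitzky (n : ℕ) (x : ℝ) :
    (Nat.factorial n : ℝ) * x^n =
      ∑ k ∈ Finset.range (n+1), (eulerian n k : ℝ) *
        ∏ i ∈ Finset.range n, (x - (k : ℝ) + (i : ℝ)) := by
  induction n with
  | zero => simp [eulerian, Nat.factorial]
  | succ n ih =>
    set P : ℕ → ℝ := fun j => ∏ i ∈ Finset.range (n+1), (x - (j:ℝ) + (i:ℝ)) with hP
    have key : ∀ k ∈ Finset.range (n+1),
        ((n:ℝ)+1) * x * ((eulerian n k : ℝ) * ∏ i ∈ Finset.range n, (x - (k:ℝ) + (i:ℝ)))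
        = ((k:ℝ)+1) * (eulerian n k : ℝ) * P k
          + (((n:ℝ)-(k:ℝ)) * (eulerian n k : ℝ) * P (k+1)) := by
      intro k _
      have h1 : P k = (∏ i ∈ Finset.range n, (x - (k:ℝ) + (i:ℝ))) * (x - k + n) := by
        simp [hP, Finset.prod_range_succ]
      have h2 : P (k+1) = (x - (k:ℝ) - 1) * ∏ i ∈ Finset.range n, (x - (k:ℝ) + (i:ℝ)) := by
        simp only [hP]
        rw [Finset.prod_range_succ' (fun i => (x - ((k+1 : ℕ):ℝ) + (i:ℝ))) n]
        rw [Finset.prod_congr rfl (fun i _ => show x - (((k:ℕ)+1 : ℕ):ℝ) + ((i+1 : ℕ):ℝ) = x - (k:ℝ) + (i:ℝ) by push_cast; ring)]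
        push_cast
        ring
      rw [h1, h2]; ring
    have hfac : ((Nat.factorial (n+1) : ℝ)) * x^(n+1)
        = ((n:ℝ)+1) * x * ((Nat.factorial n : ℝ) * x^n) := by
      push_cast [Nat.factorial_succ]; ring
    rw [hfac, ih, Finset.mul_sum, Finset.sum_congr rfl key, Finset.sum_add_distrib]
    -- left part: shift index
    have hS1 : ∑ k ∈ Finset.range (n+1), ((k:ℝ)+1) * (eulerian n k : ℝ) * P k
        = (∑ k ∈ Finset.range (n+1), ((k:ℝ)+2) * (eulerian n (k+1) : ℝ) * P (k+1))
          + (eulerian n 0 : ℝ) * P 0 := by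
      rw [Finset.sum_range_succ' (fun k => ((k:ℝ)+1) * (eulerian n k : ℝ) * P k) n]
      rw [Finset.sum_range_succ (fun k => ((k:ℝ)+2) * (eulerian n (k+1) : ℝ) * P (k+1)) n]
      rw [eulerian_eq_zero n (n+1) (Nat.lt_succ_self n)]
      have hc : ∀ k ∈ Finset.range n,
          (((k+1:ℕ):ℝ)+1) * (eulerian n (k+1) : ℝ) * P (k+1)
          = ((k:ℝ)+2) * (eulerian n (k+1) : ℝ) * P (k+1) := by
        intro k _; push_cast; ring
      rw [Finset.sum_congr rfl hc]
      push_cast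
      ring
    rw [hS1]
    -- right-hand side: peel off j = 0
    rw [Finset.sum_range_succ' (fun j => (eulerian (n+1) j : ℝ) * P j) (n+1)]
    have hrec : ∀ k ∈ Finset.range (n+1),
        (eulerian (n+1) (k+1) : ℝ) * P (k+1)
        = ((k:ℝ)+2) * (eulerian n (k+1) : ℝ) * P (k+1)
          + ((n:ℝ)-(k:ℝ)) * (eulerian n k : ℝ) * P (k+1) := by
      intro k hk
      have hkn : k ≤ n := Nat.lt_succ_iff.mp (Finset.mem_range.mp hk)
      show ((((k+2) * eulerian n (k+1) + (n-k) * eulerian n k : ℕ)) : ℝ) * P (k+1) = _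
      push_cast [Nat.cast_sub hkn]
      ring
    rw [Finset.sum_congr rfl hrec, Finset.sum_add_distrib]
    show _ = _ + _ + (eulerian n 0 : ℝ) * P 0
    ring
end

section
/- Define S(n,k)(a,b;r) by the recurrence S(n+1,k+1) = (−a·n + b·(k+1) + r)·S(n,k+1) + S(n,k), S(0,0)=1, S(n,k)=0 for k<0 or k>n, over the rationals. If b ≠ 0, then for all 0 ≤ k ≤ n: S(n,k)(a,b;r) = (1/(b^k·k!)) · Σ_{j=0}^{k} (-1)^{k-j} · C(k,j) · (bj+r)(bj+r−a)(bj+r−2a)···(bj+r−(n−1)a). -/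
/-- Generalized Stirling numbers of Hsu and Shiue, S(n,k)(a,b;r). -/
def gS (a b r : ℚ) : ℕ → ℕ → ℚ
  | 0, 0 => 1
  | 0, _+1 => 0
  | n+1, 0 => (-a * n + r) * gS a b r n 0
  | n+1, k+1 => (-a * n + b * (k+1) + r) * gS a b r n (k+1) + gS a b r n k

noncomputable def Faux (a b r : ℚ) (n k : ℕ) : ℚ :=
  ∑ j ∈ Finset.range (k+1), (-1 : ℚ)^(k-j) * (Nat.choose k j : ℚ) *
    ∏ i ∈ Finset.range n, (b * (j : ℚ) + r - (i : ℚ) * a)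

lemma neg_one_sub_pow (k j : ℕ) (h : j ≤ k) : (-1:ℚ)^(k-j) = (-1)^k * (-1)^j := by
  have h1 : (-1:ℚ)^(k-j) * (-1)^j = (-1)^k := by
    rw [← pow_add]; congr 1; omega
  calc (-1:ℚ)^(k-j) = (-1)^(k-j) * ((-1)^j * (-1)^j) := by
        rw [← pow_add, ← two_mul, pow_mul]; norm_num
    _ = (-1)^k * (-1)^j := by rw [← mul_assoc, h1]

lemma Faux_zero (a b r : ℚ) (k : ℕ) (hk : 0 < k) : Faux a b r 0 k = 0 := by
  unfold Faux
  simp only [Finset.prod_range_zero, mul_one]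
  have h : ∀ j ∈ Finset.range (k+1), (-1 : ℚ)^(k-j) * (Nat.choose k j : ℚ)
      = (-1:ℚ)^k * ((-1:ℚ)^j * (Nat.choose k j : ℚ)) := by
    intro j hj
    rw [Finset.mem_range] at hj
    rw [neg_one_sub_pow k j (Nat.lt_succ_iff.mp hj), mul_assoc]
  rw [Finset.sum_congr rfl h, ← Finset.mul_sum]
  have h2 : (∑ i ∈ Finset.range (k + 1), (-1:ℚ) ^ i * (k.choose i : ℚ)) = 0 := by
    have hcast : ((∑ i ∈ Finset.range (k + 1), (-1:ℤ) ^ i * (k.choose i : ℤ) : ℤ) : ℚ)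
        = ∑ i ∈ Finset.range (k + 1), (-1:ℚ) ^ i * (k.choose i : ℚ) := by
      push_cast; ring
    rw [← hcast, Int.alternating_sum_range_choose, if_neg (by omega)]
    simp
  rw [h2, mul_zero]

lemma Faux_key (a b r : ℚ) (n k : ℕ) :
    Faux a b r (n+1) (k+1) =
      (-a * n + b * (k+1) + r) * Faux a b r n (k+1) + b * (k+1) * Faux a b r n k := by
  have hchoose : ∀ j : ℕ, j ≤ k + 1 →
      ((k+1:ℚ) - j) * ((k+1).choose j : ℚ) = ((k:ℚ)+1) * (k.choose j : ℚ) := by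
    intro j hj
    have h3 : (k + 1).choose j * (k + 1 - j) = k.choose j * (k+1) :=
      (Nat.choose_mul_succ_eq k j).symm
    have h4 := congrArg (Nat.cast : ℕ → ℚ) h3
    push_cast [Nat.cast_sub hj] at h4
    linarith
  unfold Faux
  have hterm : ∀ j ∈ Finset.range (k+2),
      (-1 : ℚ)^(k+1-j) * ((k+1).choose j : ℚ) *
        ∏ i ∈ Finset.range (n+1), (b * (j : ℚ) + r - (i : ℚ) * a)
      = (-a * n + b * (k+1) + r) *
          ((-1 : ℚ)^(k+1-j) * ((k+1).choose j : ℚ) *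
            ∏ i ∈ Finset.range n, (b * (j : ℚ) + r - (i : ℚ) * a))
        + b * (((-1 : ℚ)^(k+1-j) * ((k+1).choose j : ℚ) * ((j:ℚ) - ((k:ℚ)+1))) *
            ∏ i ∈ Finset.range n, (b * (j : ℚ) + r - (i : ℚ) * a)) := by
    intro j _
    rw [Finset.prod_range_succ]
    ring
  have hsum : (∑ j ∈ Finset.range (k+2),
      ((-1 : ℚ)^(k+1-j) * ((k+1).choose j : ℚ) * ((j:ℚ) - ((k:ℚ)+1))) *
        ∏ i ∈ Finset.range n, (b * (j : ℚ) + r - (i : ℚ) * a))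
      = ((k:ℚ)+1) * ∑ j ∈ Finset.range (k+1), (-1 : ℚ)^(k-j) * (k.choose j : ℚ) *
          ∏ i ∈ Finset.range n, (b * (j : ℚ) + r - (i : ℚ) * a) := by
    rw [Finset.sum_range_succ]
    have hlast : ((-1 : ℚ)^(k+1-(k+1)) * ((k+1).choose (k+1) : ℚ) * (((k+1:ℕ):ℚ) - ((k:ℚ)+1))) *
        ∏ i ∈ Finset.range n, (b * ((k+1:ℕ) : ℚ) + r - (i : ℚ) * a) = 0 := by
      push_cast; ring
    rw [hlast, add_zero, Finset.mul_sum]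
    refine Finset.sum_congr rfl ?_
    intro j hj
    rw [Finset.mem_range] at hj
    have hjk : j ≤ k := Nat.lt_succ_iff.mp hj
    have hsign : (-1 : ℚ)^(k+1-j) = -(-1:ℚ)^(k-j) := by
      have h5 : k+1-j = (k-j)+1 := by omega
      rw [h5, pow_succ]; ring
    have hc := hchoose j (by omega)
    have hrw : (-1 : ℚ)^(k+1-j) * ((k+1).choose j : ℚ) * ((j:ℚ) - ((k:ℚ)+1))
        = (-1:ℚ)^(k-j) * (((k:ℚ)+1 - j) * ((k+1).choose j : ℚ)) := by
      rw [hsign]; ring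
    rw [hrw, hc]
    ring
  rw [Finset.sum_congr rfl hterm, Finset.sum_add_distrib, ← Finset.mul_sum, ← Finset.mul_sum, hsum]
  ring

lemma Faux_vanish (a b r : ℚ) : ∀ n k : ℕ, n < k → Faux a b r n k = 0 := by
  intro n
  induction n with
  | zero => intro k hk; exact Faux_zero a b r k hk
  | succ n ih =>
    intro k hk
    obtain ⟨k', rfl⟩ : ∃ k', k = k' + 1 := ⟨k - 1, by omega⟩
    rw [Faux_key, ih (k'+1) (by omega), ih k' (by omega)]
    ring

lemma gS_vanish (a b r : ℚ) : ∀ n k : ℕ, n < k → gS a b r n k = 0 := by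
  intro n
  induction n with
  | zero =>
    intro k hk
    obtain ⟨k', rfl⟩ : ∃ k', k = k' + 1 := ⟨k - 1, by omega⟩
    rfl
  | succ n ih =>
    intro k hk
    obtain ⟨k', rfl⟩ : ∃ k', k = k' + 1 := ⟨k - 1, by omega⟩
    show (-a * n + b * (k'+1) + r) * gS a b r n (k'+1) + gS a b r n k' = 0
    rw [ih (k'+1) (by omega), ih k' (by omega)]
    ring

lemma gS_eq (a b r : ℚ) (hb : b ≠ 0) : ∀ n k : ℕ,
    gS a b r n k = (1 / (b^k * (Nat.factorial k : ℚ))) * Faux a b r n k := by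
  intro n
  induction n with
  | zero =>
    intro k
    match k with
    | 0 => unfold Faux; simp [gS]
    | k+1 =>
      rw [Faux_zero a b r (k+1) (by omega)]
      simp [gS]
  | succ n ih =>
    intro k
    match k with
    | 0 =>
      show (-a * n + r) * gS a b r n 0 = _
      rw [ih 0]
      unfold Faux
      simp only [pow_zero, Nat.factorial_zero, Nat.cast_one, mul_one, one_mul, one_div, inv_one,
        Finset.sum_range_one, Nat.choose_self, Nat.cast_one, Nat.sub_self, pow_zero,
        Nat.cast_zero, mul_zero, zero_add, Finset.prod_range_succ]
      ring
    | k+1 =>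
      show (-a * n + b * (k+1) + r) * gS a b r n (k+1) + gS a b r n k = _
      rw [ih (k+1), ih k, Faux_key]
      have hfact : ((k+1).factorial : ℚ) = ((k:ℚ)+1) * (k.factorial : ℚ) := by
        rw [Nat.factorial_succ]; push_cast; ring
      have hf0 : (k.factorial : ℚ) ≠ 0 := Nat.cast_ne_zero.mpr k.factorial_ne_zero
      have hk1 : ((k:ℚ)+1) ≠ 0 := by positivity
      rw [hfact]
      field_simp
      ring

theorem gS_rank_one_formula (a b r : ℚ) (hb : b ≠ 0) (n k : ℕ) (hkn : k ≤ n) :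
    gS a b r n k =
      (1 / (b^k * (Nat.factorial k : ℚ))) *
        ∑ j ∈ Finset.range (k+1), (-1 : ℚ)^(k-j) * (Nat.choose k j : ℚ) *
          ∏ i ∈ Finset.range n, (b * (j : ℚ) + r - (i : ℚ) * a) :=
  gS_eq a b r hb n k
end

section
/- For all 0 ≤ k ≤ n and all rationals a, r: S(n,k)(a,a;r) = C(n,k) · r(r−a)(r−2a)···(r−(n−k−1)a); in particular S(n,k)(1,1;r) = C(n,k) · r^{↓(n−k)} (the rook number formula) and S(n,k)(0,0;r) = C(n,k)·r^{n−k}. -/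
lemma gS_gt (a b r : ℚ) : ∀ n k, n < k → gS a b r n k = 0 := by
  intro n
  induction n with
  | zero =>
    intro k hk
    match k, hk with
    | m+1, _ => rfl
  | succ n ih =>
    intro k hk
    match k, hk with
    | m+1, hk =>
      have h1 : n < m+1 := by omega
      have h2 : n < m := by omega
      simp [gS, ih _ h1, ih _ h2]

lemma gS_diag (a r : ℚ) : ∀ n k, k ≤ n →
    gS a a r n k = (Nat.choose n k : ℚ) * ∏ i ∈ Finset.range (n-k), (r - (i:ℚ)*a) := by
  intro n
  induction n with
  | zero =>
    intro k hk
    interval_cases k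
    simp [gS]
  | succ n ih =>
    intro k hk
    match k with
    | 0 =>
      have h0 : gS a a r (n+1) 0 = (-a*n + r) * gS a a r n 0 := rfl
      rw [h0, ih 0 (Nat.zero_le _)]
      simp only [Nat.choose_zero_right, Nat.cast_one, one_mul, Nat.sub_zero,
        Finset.prod_range_succ]
      ring
    | m+1 =>
      have hrec : gS a a r (n+1) (m+1)
          = (-a*n + a*(m+1) + r) * gS a a r n (m+1) + gS a a r n m := rfl
      rcases Nat.lt_or_ge m n with h | h
      · have h' : m + 1 ≤ n := h
        rw [hrec, ih (m+1) h', ih m (by omega)]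
        rw [show (n+1)-(m+1) = n - m from by omega,
          show n - m = (n - (m+1)) + 1 from by omega, Finset.prod_range_succ]
        have hc : (Nat.choose (n+1) (m+1) : ℚ) = Nat.choose n (m+1) + Nat.choose n m := by
          rw [Nat.choose_succ_succ]; push_cast; ring
        rw [hc]
        have hcast : ((n - (m+1) : ℕ) : ℚ) = (n : ℚ) - ((m : ℚ) + 1) := by
          rw [Nat.cast_sub h']; push_cast; ring
        rw [hcast]
        ring
      · have hm : m = n := by omega
        subst hm
        rw [hrec, gS_gt a a r m (m+1) (by omega), ih m le_rfl]
        simp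

theorem gS_diagonal_eval (a r : ℚ) (n k : ℕ) (hkn : k ≤ n) :
    gS a a r n k = (Nat.choose n k : ℚ) * ∏ i ∈ Finset.range (n-k), (r - (i : ℚ) * a) ∧
    gS 1 1 r n k = (Nat.choose n k : ℚ) * ∏ i ∈ Finset.range (n-k), (r - (i : ℚ)) ∧
    gS 0 0 r n k = (Nat.choose n k : ℚ) * r^(n-k) := by
  refine ⟨gS_diag a r n k hkn, ?_, ?_⟩
  · rw [gS_diag 1 r n k hkn]; simp
  · rw [gS_diag 0 r n k hkn]; simp
end

section
/- Generalized Stirling numbers satisfy the symmetries S(n,k)(−a,b;r) = S(n,k)(a,b; r+a(n−1)) and S(n,k)(a,−b;r) = S(n,k)(a,b; r−bk) for all 0 ≤ k ≤ n. -/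
lemma gS_zero (a b r : ℚ) (n : ℕ) :
    gS a b r (n+1) 0 = (-a * n + r) * gS a b r n 0 := rfl

lemma gS_succ (a b r : ℚ) (n k : ℕ) :
    gS a b r (n+1) (k+1)
      = (-a * n + b * (k+1) + r) * gS a b r n (k+1) + gS a b r n k := rfl

/-- Shift identity in r by b. -/
lemma gS_shift_b (a b : ℚ) : ∀ n : ℕ, ∀ r : ℚ, ∀ k : ℕ,
    gS a b (r + b) n k = gS a b r n k + b * (k+1) * gS a b r n (k+1)
  | 0, r, 0 => by simp [gS]
  | 0, r, k+1 => by simp [gS]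
  | n+1, r, 0 => by
    rw [gS_zero, gS_shift_b a b n r 0, gS_zero, gS_succ]
    push_cast; ring
  | n+1, r, k+1 => by
    rw [gS_succ, gS_shift_b a b n r (k+1), gS_shift_b a b n r k, gS_succ, gS_succ]
    push_cast; ring

/-- Base-case dual recurrence. -/
lemma gS_dual_zero (a b : ℚ) : ∀ n : ℕ, ∀ r : ℚ,
    gS a b r (n+1) 0 = r * gS a b (r - a) n 0
  | 0, r => by simp [gS]
  | n+1, r => by
    rw [gS_zero, gS_dual_zero a b n r, gS_zero]
    push_cast; ring

/-- Dual recurrence (removing the first element). -/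
lemma gS_dual (a b : ℚ) : ∀ n : ℕ, ∀ r : ℚ, ∀ k : ℕ,
    gS a b r (n+1) (k+1)
      = (b * (k+1) + r) * gS a b (r - a) n (k+1) + gS a b (r - a) n k
  | 0, r, 0 => by simp [gS]
  | 0, r, k+1 => by simp [gS]
  | n+1, r, 0 => by
    rw [gS_succ, gS_dual a b n r 0, gS_dual_zero a b n r, gS_succ, gS_zero a b (r - a) n]
    push_cast; ring
  | n+1, r, k+1 => by
    rw [gS_succ, gS_dual a b n r (k+1), gS_dual a b n r k, gS_succ, gS_succ]
    push_cast; ring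

lemma gS_neg_a (a b : ℚ) : ∀ n : ℕ, ∀ r : ℚ, ∀ k : ℕ,
    gS (-a) b r n k = gS a b (r + a * n - a) n k
  | 0, r, 0 => by simp [gS]
  | 0, r, k+1 => by simp [gS]
  | n+1, r, 0 => by
    rw [gS_zero, gS_neg_a a b n r 0, gS_dual_zero a b n]
    have h : r + a * ((n+1 : ℕ) : ℚ) - a - a = r + a * (n : ℚ) - a := by push_cast; ring
    rw [h]; push_cast; ring
  | n+1, r, k+1 => by
    rw [gS_succ, gS_neg_a a b n r (k+1), gS_neg_a a b n r k, gS_dual a b n]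
    have h : r + a * ((n+1 : ℕ) : ℚ) - a - a = r + a * (n : ℚ) - a := by push_cast; ring
    rw [h]; push_cast; ring

lemma gS_neg_b (a b : ℚ) : ∀ n : ℕ, ∀ r : ℚ, ∀ k : ℕ,
    gS a (-b) r n k = gS a b (r - b * k) n k
  | 0, r, 0 => by simp [gS]
  | 0, r, k+1 => by simp [gS]
  | n+1, r, 0 => by
    rw [gS_zero, gS_neg_b a b n r 0, gS_zero]
    push_cast; ring
  | n+1, r, k+1 => by
    rw [gS_succ, gS_neg_b a b n r (k+1), gS_neg_b a b n r k, gS_succ]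
    have h : r - b * (k : ℚ) = (r - b * ((k+1 : ℕ) : ℚ)) + b := by push_cast; ring
    rw [h, gS_shift_b a b n (r - b * ((k+1 : ℕ) : ℚ)) k]
    push_cast; ring

theorem gS_sign_symmetries (a b r : ℚ) (n k : ℕ) (hkn : k ≤ n) :
    gS (-a) b r n k = gS a b (r + a * ((n : ℚ) - 1)) n k ∧
    gS a (-b) r n k = gS a b (r - b * (k : ℚ)) n k := by
  constructor
  · rw [gS_neg_a a b n r k]
    have h : r + a * (n : ℚ) - a = r + a * ((n : ℚ) - 1) := by ring
    rw [h]
  · exact gS_neg_b a b n r k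
end
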